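/- arXiv:2307.04057 — 3 statements merged into one kernel-verified Lean document; each statement's English description precedes it below -/
import Mathlib

section
/- (Theorem: bidirectional attention as a mixture of continuous word experts.) Define for each position j ∈ [S] the expert f_j(X̄) = W^{LOV} (X̄C+P)^T e_j + g + D e_m ∈ ℝ^V, the gating score h_j(X̄) = e_j^T (X̄C+P) W^{KQ} (c_{V+1} + P^T e_m) / √d_w, the mixture weight π_j(X̄) = ( softmax(h(X̄)) )_j, and the mixture-of-experts predictor F(X̄) = Σ_{j∈[S]} π_j(X̄) f_j(X̄). Then the MLM objective of single-head single-layer bidirectional attention satisfies L_MLM(m,b) = −F(X̄)_b + log Σ_{k=1}^{V} exp( F(X̄)_k ); that is, it equals the cross-entropy between the one-hot encoding of the masked token b and the prediction probabilities softmax(F(X̄)). -/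
open Matrix BigOperators

noncomputable def softmax {ι : Type*} [Fintype ι] (v : ι → ℝ) : ι → ℝ :=
  fun i => Real.exp (v i) / ∑ l, Real.exp (v l)

/-!
At the masked position the query is `c_{V+1} + Pᵀ eₘ`, so row `m` of the attention
matrix is exactly `softmax h`, and the attention output at `m` is the `π`-weighted
average of the value vectors `Wᵛ (X̄C+P)ᵀ eⱼ`. Everything after the attention layer
(output projection, the residual connections and the final linear read-out) is
affine, so it commutes with this convex combination: the logits `W'' Z''ₘ` are the
`π`-average of the experts `f j`, i.e. equal to `F`. The loss is then the
cross-entropy of `softmax F` at `b`.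
-/

section Softmax

variable {ι : Type*} [Fintype ι]

theorem sum_softmax [Nonempty ι] (v : ι → ℝ) : ∑ i, softmax v i = 1 := by
  simp only [softmax, ← Finset.sum_div]
  exact div_self (by positivity)

theorem log_softmax (v : ι → ℝ) (i : ι) :
    Real.log (softmax v i) = v i - Real.log (∑ l, Real.exp (v l)) := by
  have : Nonempty ι := ⟨i⟩
  rw [softmax, Real.log_div (Real.exp_ne_zero _) (by positivity), Real.log_exp]

end Softmax

theorem Finset.sum_smul_add_of_sum_eq_one {R M ι : Type*} [Semiring R] [AddCommMonoid M]
    [Module R M] [Fintype ι] {w : ι → R} (hw : ∑ j, w j = 1) (v : ι → M) (c : M) :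
    ∑ j, w j • (v j + c) = ∑ j, w j • v j + c := by
  rw [Finset.sum_congr rfl fun j _ => smul_add (w j) (v j) c, Finset.sum_add_distrib,
    ← Finset.sum_smul, hw, one_smul]

namespace Matrix

variable {R : Type*} [CommSemiring R] {ι m n o : Type*} [Fintype n]

theorem mul_row_eq_of_row_eq_single [DecidableEq n] (X : Matrix m n R) (C : Matrix n o R)
    {i : m} {k : n} (hX : X i = Pi.single k 1) : (X * C) i = C k := by
  rw [mul_apply_eq_vecMul, hX, single_one_vecMul]
  rfl

theorem mul_mul_transpose_row [Fintype m] (A : Matrix ι m R) (X : Matrix m n R)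
    (W : Matrix o n R) (i : ι) : (A * X * Wᵀ) i = ∑ j, A i j • W *ᵥ X j := by
  rw [mul_apply_eq_vecMul, mul_apply_eq_vecMul A X, vecMul_eq_sum (A i) X, sum_vecMul]
  simp only [vecMul_transpose, mulVec_smul]

theorem mul_transpose_mul_mul_transpose_apply [Fintype o] (X : Matrix m n R)
    (A B : Matrix o n R) (i j : m) : (X * Aᵀ * B * Xᵀ) i j = X j ⬝ᵥ (Bᵀ * A) *ᵥ X i := by
  rw [dotProduct_mulVec, dotProduct_comm, ← mulVec_transpose, transpose_mul, transpose_transpose,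
    dotProduct_mulVec, Matrix.mul_assoc X, ← mul_apply_eq_vecMul]
  rfl

end Matrix

theorem bidirectional_attention_as_mixture_of_experts_general
    (S V p d dw : ℕ)
    (C : Matrix (Fin (V + 1)) (Fin p) ℝ)
    (P : Matrix (Fin S) (Fin p) ℝ)
    (Xbar : Matrix (Fin S) (Fin (V + 1)) ℝ)
    (m : Fin S) (b : Fin V)
    (hmask : ∀ l : Fin (V + 1), Xbar m l = if l = Fin.last V then 1 else 0)
    (Wv : Matrix (Fin d) (Fin p) ℝ) (Wq : Matrix (Fin dw) (Fin p) ℝ)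
    (Wk : Matrix (Fin dw) (Fin p) ℝ) (Wo : Matrix (Fin d) (Fin p) ℝ)
    (W' : Matrix (Fin p) (Fin p) ℝ) (W'' : Matrix (Fin V) (Fin p) ℝ)
    -- the forward pass
    (Xp : Matrix (Fin S) (Fin p) ℝ) (hXp : Xp = Xbar * C + P)
    (Xattn : Matrix (Fin S) (Fin d) ℝ)
    (hXattn : Xattn =
      (Matrix.of fun i =>
        softmax (((1 / Real.sqrt dw) • (Xp * Wq.transpose * Wk * Xp.transpose)) i))
        * Xp * Wv.transpose)
    (Z' : Matrix (Fin S) (Fin p) ℝ) (hZ' : Z' = Xp + Xattn * Wo)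
    (Z'' : Matrix (Fin S) (Fin p) ℝ) (hZ'' : ∀ i : Fin S, Z'' i = Z' i + W'.mulVec (Z' i))
    -- the MLM loss for predicting token `b` at the masked position `m`
    (L : ℝ) (hL : L = - Real.log (softmax (W''.mulVec (Z'' m)) b))
    -- the reparametrized matrices
    (Wl : Matrix (Fin V) (Fin p) ℝ) (hWl : Wl = W'' + W'' * W')
    (g : Fin V → ℝ) (hg : g = Wl.mulVec (C (Fin.last V)))
    (D : Matrix (Fin V) (Fin S) ℝ) (hD : D = Wl * P.transpose)
    (WLOV : Matrix (Fin V) (Fin p) ℝ) (hWLOV : WLOV = Wl * Wo.transpose * Wv)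
    (WKQ : Matrix (Fin p) (Fin p) ℝ) (hWKQ : WKQ = Wk.transpose * Wq)
    -- the experts, gating scores, mixture weights, and mixture-of-experts predictor
    (f : Fin S → Fin V → ℝ)
    (hf : f = fun j => WLOV.mulVec (Xp j) + g + D.mulVec (Pi.single m 1))
    (h : Fin S → ℝ)
    (hh : h = fun j => (Xp j ⬝ᵥ WKQ.mulVec (C (Fin.last V) + P m)) / Real.sqrt dw)
    (π : Fin S → ℝ) (hπ : π = softmax h)
    (F : Fin V → ℝ) (hF : F = ∑ j, π j • f j) :
    L = -(F b) + Real.log (∑ k, Real.exp (F k)) ∧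
    L = - Real.log (softmax F b) := by
  have hXpm : Xp m = C (Fin.last V) + P m := by
    rw [hXp, ← mul_row_eq_of_row_eq_single Xbar C (funext fun l => by
      rw [hmask, Pi.single_apply])]
    rfl
  have hπ_attn : π = softmax (((1 / Real.sqrt dw) • (Xp * Wqᵀ * Wk * Xpᵀ)) m) := by
    rw [hπ, hh]
    congr 1
    funext j
    rw [Matrix.smul_apply, mul_transpose_mul_mul_transpose_apply, hXpm, hWKQ, smul_eq_mul,
      div_eq_inv_mul, one_div]
  have hπ_sum : ∑ j, π j = 1 := by
    have : Nonempty (Fin S) := ⟨m⟩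
    rw [hπ, sum_softmax]
  have hattn : Xattn m = ∑ j, π j • Wv *ᵥ Xp j := by
    rw [hXattn, mul_mul_transpose_row, hπ_attn]
    rfl
  have hlogits : W'' *ᵥ Z'' m = F := by
    calc W'' *ᵥ Z'' m = Wl *ᵥ Xp m + Wl *ᵥ Woᵀ *ᵥ Xattn m := by
          rw [hZ'', hZ', hWl, mulVec_add, mulVec_mulVec, ← add_mulVec, ← mulVec_add,
            mulVec_transpose, ← mul_apply_eq_vecMul]
          rfl
      _ = ∑ j, π j • WLOV *ᵥ Xp j + (g + D *ᵥ Pi.single m 1) := by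
          rw [add_comm, hattn, hXpm, mulVec_add, hg, hD, mulVec_single_one, hWLOV,
            mulVec_mulVec, mulVec_sum]
          simp only [mulVec_smul, mulVec_mulVec]
          rfl
      _ = F := by
          rw [hF, hf, ← Finset.sum_smul_add_of_sum_eq_one hπ_sum]
          simp only [add_assoc]
  have hcross : L = - Real.log (softmax F b) := by rw [hL, hlogits]
  exact ⟨by rw [hcross, log_softmax]; ring, hcross⟩

/-- **Theorem (bidirectional attention as a mixture of continuous word experts).**
Define the experts `f j = WLOV (X̄C+P)ᵀ eⱼ + g + D eₘ`, the gating scores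
`h j = eⱼᵀ (X̄C+P) WKQ (c_{V+1} + Pᵀ eₘ)/√dw`, the mixture weights `π = softmax h`,
and the mixture-of-experts predictor `F = Σⱼ π j • f j`. Then the MLM objective of
single-head single-layer bidirectional attention satisfies
`L = −F(X̄)_b + log Σₖ exp(F(X̄)_k)`, the cross-entropy between the one-hot encoding of
the masked token `b` and the prediction probabilities `softmax (F X̄)`. -/
theorem bidirectional_attention_as_mixture_of_experts
    (S V p d dw : ℕ) (hS : 0 < S) (hV : 0 < V) (hp : 0 < p) (hd : 0 < d) (hdw : 0 < dw)
    (C : Matrix (Fin (V + 1)) (Fin p) ℝ)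
    (P : Matrix (Fin S) (Fin p) ℝ)
    (Xbar : Matrix (Fin S) (Fin (V + 1)) ℝ)
    (m : Fin S) (b : Fin V)
    (hrows : ∀ i : Fin S, ∃ k : Fin (V + 1), ∀ l : Fin (V + 1),
      Xbar i l = if l = k then 1 else 0)
    (hmask : ∀ l : Fin (V + 1), Xbar m l = if l = Fin.last V then 1 else 0)
    (Wv : Matrix (Fin d) (Fin p) ℝ) (Wq : Matrix (Fin dw) (Fin p) ℝ)
    (Wk : Matrix (Fin dw) (Fin p) ℝ) (Wo : Matrix (Fin d) (Fin p) ℝ)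
    (W' : Matrix (Fin p) (Fin p) ℝ) (W'' : Matrix (Fin V) (Fin p) ℝ)
    -- the forward pass
    (Xp : Matrix (Fin S) (Fin p) ℝ) (hXp : Xp = Xbar * C + P)
    (Xattn : Matrix (Fin S) (Fin d) ℝ)
    (hXattn : Xattn =
      (Matrix.of fun i =>
        softmax (((1 / Real.sqrt dw) • (Xp * Wq.transpose * Wk * Xp.transpose)) i))
        * Xp * Wv.transpose)
    (Z' : Matrix (Fin S) (Fin p) ℝ) (hZ' : Z' = Xp + Xattn * Wo)
    (Z'' : Matrix (Fin S) (Fin p) ℝ) (hZ'' : ∀ i : Fin S, Z'' i = Z' i + W'.mulVec (Z' i))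
    -- the MLM loss for predicting token `b` at the masked position `m`
    (L : ℝ) (hL : L = - Real.log (softmax (W''.mulVec (Z'' m)) b))
    -- the reparametrized matrices
    (Wl : Matrix (Fin V) (Fin p) ℝ) (hWl : Wl = W'' + W'' * W')
    (g : Fin V → ℝ) (hg : g = Wl.mulVec (C (Fin.last V)))
    (D : Matrix (Fin V) (Fin S) ℝ) (hD : D = Wl * P.transpose)
    (WLOV : Matrix (Fin V) (Fin p) ℝ) (hWLOV : WLOV = Wl * Wo.transpose * Wv)
    (WKQ : Matrix (Fin p) (Fin p) ℝ) (hWKQ : WKQ = Wk.transpose * Wq)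
    -- the experts, gating scores, mixture weights, and mixture-of-experts predictor
    (f : Fin S → Fin V → ℝ)
    (hf : f = fun j => WLOV.mulVec (Xp j) + g + D.mulVec (Pi.single m 1))
    (h : Fin S → ℝ)
    (hh : h = fun j => (Xp j ⬝ᵥ WKQ.mulVec (C (Fin.last V) + P m)) / Real.sqrt dw)
    (π : Fin S → ℝ) (hπ : π = softmax h)
    (F : Fin V → ℝ) (hF : F = ∑ j, π j • f j) :
    L = -(F b) + Real.log (∑ k, Real.exp (F k)) ∧
    L = - Real.log (softmax F b) :=
  bidirectional_attention_as_mixture_of_experts_general S V p d dw C P Xbar m b hmask Wv Wq Wk Wo W'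
    W'' Xp hXp Xattn hXattn Z' hZ' Z'' hZ'' L hL Wl hWl g hg D hD WLOV hWLOV WKQ hWKQ f hf h hh π hπ
    F hF
end

section
/- (Proposition 4, linear word analogies in CBOW embeddings.) Suppose the embeddings exactly factorize M, i.e., w_i^T c_j = M_{ij} for all i, j ∈ [|V|], and suppose the |V|×p context-embedding matrix C (with rows c_j^T) has rank p, with left inverse C† = (C^T C)^{−1} C^T. Then for any words a, a*, b, b* such that the sets W = {w_b, w_{a*}} and W* = {w_{b*}, w_a} each have exactly two elements, w_{b*} = w_{a*} − w_a + w_b + C†( ρ^{W,W*} + σ^{W} − σ^{W*} + δ^{W,W*} ) and also w_{b*} = w_{a*} − w_a + w_b + C†( ξ^{W,W*} + σ^{W} − σ^{W*} ), where ρ^{W,W*}, σ^{W}, σ^{W*}, δ^{W,W*}, ξ^{W,W*} ∈ ℝ^{|V|} are the vectors with j-th coordinates ρ_j^{W,W*} = log( p(c_j | W*) / p(c_j | W) ), σ_j^{W} = log( p(W | c_j) / Π_{w_i ∈ W} p(w_i | c_j) ), σ_j^{W*} = log( p(W* | c_j) / Π_{w_i ∈ W*} p(w_i | c_j) ), δ_j^{W,W*}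 = log( p(W*) / p(W) ), ξ_j^{W,W*} = log( p(W* | c_j) / p(W | c_j) ). -/
/-!
Taking logarithms, `ξ + σ − σ*` telescopes to `∑_{W*} log p(wᵢ | cⱼ) − ∑_W log p(wᵢ | cⱼ)`.
Because `|W| = |W*|` the shift `log |V|` in `M` cancels, so this is
`∑_{W*} M i j − ∑_W M i j = cⱼᵀ (∑_{W*} wᵢ − ∑_W wᵢ)`, i.e. `C (w_{b*} + w_a − w_b − w_{a*})`,
and the left inverse `C†` recovers the offset. Finally `ρ + δ = ξ` by Bayes' rule.
-/

open Matrix Finset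

namespace Matrix

variable {m n R : Type*} [Fintype m] [Fintype n] [DecidableEq n] [Field R]

theorem isUnit_of_rank_eq_card {A : Matrix n n R} (h : A.rank = Fintype.card n) : IsUnit A := by
  have hrange : LinearMap.range A.mulVecLin = ⊤ :=
    Submodule.eq_top_of_finrank_eq (h.trans (Module.finrank_fintype_fun_eq_card R).symm)
  exact mulVec_surjective_iff_isUnit.mp (LinearMap.range_eq_top.mp hrange)

variable [LinearOrder R] [IsStrictOrderedRing R]

theorem transpose_mul_self_inv_mul_transpose_mul {A : Matrix m n R}
    (h : A.rank = Fintype.card n) : (Aᵀ * A)⁻¹ * Aᵀ * A = 1 := by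
  have hunit : IsUnit (Aᵀ * A) := isUnit_of_rank_eq_card (by rw [rank_transpose_mul_self, h])
  rw [Matrix.mul_assoc, nonsing_inv_mul _ ((isUnit_iff_isUnit_det _).mp hunit)]

end Matrix

theorem Finset.sum_add_const_sub_sum_add_const {ι M : Type*} [AddCommGroup M] {s t : Finset ι}
    (h : s.card = t.card) (g : ι → M) (κ : M) :
    ∑ i ∈ t, (g i + κ) - ∑ i ∈ s, (g i + κ) = ∑ i ∈ t, g i - ∑ i ∈ s, g i := by
  simp only [sum_add_distrib, sum_const, h]
  abel

namespace Real

variable {ι : Type*}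

theorem log_div_prod (s : Finset ι) {x : ℝ} (hx : x ≠ 0) {f : ι → ℝ} (hf : ∀ i ∈ s, f i ≠ 0) :
    log (x / ∏ i ∈ s, f i) = log x - ∑ i ∈ s, log (f i) := by
  rw [log_div hx (prod_ne_zero_iff.mpr hf), log_prod hf]

theorem log_div_add_log_div_prod_sub_log_div_prod (s t : Finset ι) {x y : ℝ} (hx : x ≠ 0)
    (hy : y ≠ 0) {f : ι → ℝ} (hs : ∀ i ∈ s, f i ≠ 0) (ht : ∀ i ∈ t, f i ≠ 0) :
    log (y / x) + log (x / ∏ i ∈ s, f i) - log (y / ∏ i ∈ t, f i)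
      = ∑ i ∈ t, log (f i) - ∑ i ∈ s, log (f i) := by
  rw [log_div hy hx, log_div_prod s hx hs, log_div_prod t hy ht]
  ring

theorem log_div_div_add_log_div {x y P Q : ℝ} (hx : x ≠ 0) (hy : y ≠ 0) (hP : P ≠ 0)
    (hQ : Q ≠ 0) : log ((x / Q) / (y / P)) + log (Q / P) = log (x / y) := by
  rw [← log_mul (by positivity) (by positivity)]
  congr 1
  field_simp

end Real

theorem cbow_linear_word_analogies_general
    (V p : ℕ)
    -- joint probabilities `p(wᵢ, cⱼ)` and context marginals `p(cⱼ)`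
    (pj : Fin V → Fin V → ℝ) (hpj : ∀ i j, 0 < pj i j)
    (pc : Fin V → ℝ) (hpc : ∀ j, 0 < pc j)
    -- the matrix `M`
    (M : Fin V → Fin V → ℝ)
    (hM : M = fun i j => Real.log (pj i j / pc j) + Real.log V)
    -- center embeddings `wᵢ` and context embeddings `cⱼ`
    (w : Fin V → Fin p → ℝ) (c : Fin V → Fin p → ℝ)
    -- exact factorization `wᵢᵀ cⱼ = M i j`
    (hfact : ∀ i j : Fin V, w i ⬝ᵥ c j = M i j)
    -- the context-embedding matrix, its rank-`p` assumption, and its left inverse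
    (Cmat : Matrix (Fin V) (Fin p) ℝ) (hC : Cmat = Matrix.of c)
    (hrank : Cmat.rank = p)
    (Cdag : Matrix (Fin p) (Fin V) ℝ)
    (hCdag : Cdag = (Cmat.transpose * Cmat)⁻¹ * Cmat.transpose)
    -- the four words and the two word sets, each with exactly two elements
    (a astar b bstar : Fin V) (hW : b ≠ astar) (hWstar : bstar ≠ a)
    (W Wstar : Finset (Fin V)) (hWdef : W = {b, astar}) (hWstardef : Wstar = {bstar, a})
    -- set probabilities `p(W), p(W*)` and set-context joints `p(W,cⱼ), p(W*,cⱼ)`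
    (pW pWstar : ℝ) (hpW : 0 < pW) (hpWstar : 0 < pWstar)
    (pWc pWstarc : Fin V → ℝ) (hpWc : ∀ j, 0 < pWc j) (hpWstarc : ∀ j, 0 < pWstarc j)
    -- the error-term vectors
    (ρ : Fin V → ℝ) (hρ : ρ = fun j => Real.log ((pWstarc j / pWstar) / (pWc j / pW)))
    (σ : Fin V → ℝ)
    (hσ : σ = fun j => Real.log ((pWc j / pc j) / ∏ i ∈ W, (pj i j / pc j)))
    (σs : Fin V → ℝ)
    (hσs : σs = fun j => Real.log ((pWstarc j / pc j) / ∏ i ∈ Wstar, (pj i j / pc j)))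
    (δ : Fin V → ℝ) (hδ : δ = fun _ => Real.log (pWstar / pW))
    (ξ : Fin V → ℝ) (hξ : ξ = fun j => Real.log ((pWstarc j / pc j) / (pWc j / pc j))) :
    w bstar = w astar - w a + w b + Cdag.mulVec (ρ + σ - σs + δ) ∧
    w bstar = w astar - w a + w b + Cdag.mulVec (ξ + σ - σs) 
 := by
  have hleft : Cdag * Cmat = 1 := by
    rw [hCdag]
    exact transpose_mul_self_inv_mul_transpose_mul (hrank.trans (Fintype.card_fin p).symm)
  have hξσ : ξ + σ - σs = Cmat *ᵥ (∑ i ∈ Wstar, w i - ∑ i ∈ W, w i) := by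
    funext j
    have hcard : W.card = Wstar.card := by rw [hWdef, hWstardef, card_pair hW, card_pair hWstar]
    have hcond : ∀ i, pj i j / pc j ≠ 0 := fun i => (div_pos (hpj i j) (hpc j)).ne'
    calc (ξ + σ - σs) j
        = ∑ i ∈ Wstar, Real.log (pj i j / pc j) - ∑ i ∈ W, Real.log (pj i j / pc j) := by
          simp only [Pi.add_apply, Pi.sub_apply, hξ, hσ, hσs]
          exact Real.log_div_add_log_div_prod_sub_log_div_prod W Wstar
            (div_pos (hpWc j) (hpc j)).ne' (div_pos (hpWstarc j) (hpc j)).ne'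
            (fun i _ => hcond i) (fun i _ => hcond i)
      _ = ∑ i ∈ Wstar, M i j - ∑ i ∈ W, M i j := by
          rw [hM, sum_add_const_sub_sum_add_const hcard]
      _ = (Cmat *ᵥ (∑ i ∈ Wstar, w i - ∑ i ∈ W, w i)) j := by
          rw [hC]
          change _ = c j ⬝ᵥ _
          simp only [dotProduct_comm (c j), sub_dotProduct, sum_dotProduct, hfact]
  have hρδ : ρ + σ - σs + δ = ξ + σ - σs := by
    funext j
    simp only [Pi.add_apply, Pi.sub_apply, hρ, hδ, hξ, div_div_div_cancel_right₀ (hpc j).ne']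
    rw [← Real.log_div_div_add_log_div (hpWstarc j).ne' (hpWc j).ne' hpW.ne' hpWstar.ne']
    ring
  have hoffset : w bstar = w astar - w a + w b + Cdag *ᵥ (ξ + σ - σs) := by
    rw [hξσ, mulVec_mulVec, hleft, one_mulVec, hWdef, hWstardef, sum_pair hW, sum_pair hWstar]
    abel
  exact ⟨hρδ ▸ hoffset, hoffset⟩

/-- **Proposition 4 (linear word analogies in CBOW embeddings).**
Suppose the embeddings exactly factorize `M`, i.e. `wᵢᵀcⱼ = M i j` for all `i, j`, and
the `|V|×p` context-embedding matrix `C` has rank `p`, with left inverse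
`C† = (CᵀC)⁻¹Cᵀ`. Then for words `a, a*, b, b*` such that `W = {w_b, w_{a*}}` and
`W* = {w_{b*}, w_a}` each have exactly two elements,
`w_{b*} = w_{a*} − w_a + w_b + C†(ρ + σ − σ* + δ)` and
`w_{b*} = w_{a*} − w_a + w_b + C†(ξ + σ − σ*)`. -/
theorem cbow_linear_word_analogies
    (V p : ℕ) (hV : 1 ≤ V)
    -- joint probabilities `p(wᵢ, cⱼ)` and context marginals `p(cⱼ)`
    (pj : Fin V → Fin V → ℝ) (hpj : ∀ i j, 0 < pj i j)
    (pc : Fin V → ℝ) (hpc : ∀ j, 0 < pc j)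
    -- the matrix `M`
    (M : Fin V → Fin V → ℝ)
    (hM : M = fun i j => Real.log (pj i j / pc j) + Real.log V)
    -- center embeddings `wᵢ` and context embeddings `cⱼ`
    (w : Fin V → Fin p → ℝ) (c : Fin V → Fin p → ℝ)
    -- exact factorization `wᵢᵀ cⱼ = M i j`
    (hfact : ∀ i j : Fin V, w i ⬝ᵥ c j = M i j)
    -- the context-embedding matrix, its rank-`p` assumption, and its left inverse
    (Cmat : Matrix (Fin V) (Fin p) ℝ) (hC : Cmat = Matrix.of c)
    (hrank : Cmat.rank = p)
    (Cdag : Matrix (Fin p) (Fin V) ℝ)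
    (hCdag : Cdag = (Cmat.transpose * Cmat)⁻¹ * Cmat.transpose)
    -- the four words and the two word sets, each with exactly two elements
    (a astar b bstar : Fin V) (hW : b ≠ astar) (hWstar : bstar ≠ a)
    (W Wstar : Finset (Fin V)) (hWdef : W = {b, astar}) (hWstardef : Wstar = {bstar, a})
    -- set probabilities `p(W), p(W*)` and set-context joints `p(W,cⱼ), p(W*,cⱼ)`
    (pW pWstar : ℝ) (hpW : 0 < pW) (hpWstar : 0 < pWstar)
    (pWc pWstarc : Fin V → ℝ) (hpWc : ∀ j, 0 < pWc j) (hpWstarc : ∀ j, 0 < pWstarc j)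
    -- the error-term vectors
    (ρ : Fin V → ℝ) (hρ : ρ = fun j => Real.log ((pWstarc j / pWstar) / (pWc j / pW)))
    (σ : Fin V → ℝ)
    (hσ : σ = fun j => Real.log ((pWc j / pc j) / ∏ i ∈ W, (pj i j / pc j)))
    (σs : Fin V → ℝ)
    (hσs : σs = fun j => Real.log ((pWstarc j / pc j) / ∏ i ∈ Wstar, (pj i j / pc j)))
    (δ : Fin V → ℝ) (hδ : δ = fun _ => Real.log (pWstar / pW))
    (ξ : Fin V → ℝ) (hξ : ξ = fun j => Real.log ((pWstarc j / pc j) / (pWc j / pc j))) :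
    w bstar = w astar - w a + w b + Cdag.mulVec (ρ + σ - σs + δ) ∧
    w bstar = w astar - w a + w b + Cdag.mulVec (ξ + σ - σs) :=
  cbow_linear_word_analogies_general V p pj hpj pc hpc M hM w c hfact Cmat hC hrank Cdag hCdag a
    astar b bstar hW hWstar W Wstar hWdef hWstardef pW pWstar hpW hpWstar pWc pWstarc hpWc hpWstarc
    ρ hρ σ hσ σs hσs δ hδ ξ hξ
end

section
/- (Exact version of Proposition 5, linear analogies transfer to CBOW context embeddings.) Let r, s, t, u ∈ [n] be words satisfying: (i) μ_r μ_s = μ_t μ_u (encoding that p({r,s}) = p({t,u}) under exact marginal independence within each pair); (ii) w_r + w_s = w_t + w_u. Suppose further that the n×p matrix W with rows w_v^T has rank p, i.e., the only x ∈ ℝ^p with w_v^T x = 0 for all v ∈ [n] is x = 0. Then c_r + c_s = c_t + c_u. -/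
open Matrix BigOperators

section DotProduct

variable {ι κ R : Type*} [Fintype κ] [CommRing R]

theorem dotProduct_add_eq_of_add_eq {w : ι → κ → R} {r s t u : ι}
    (h : w r + w s = w t + w u) (x : κ → R) :
    w r ⬝ᵥ x + w s ⬝ᵥ x = w t ⬝ᵥ x + w u ⬝ᵥ x := by
  rw [← add_dotProduct, h, add_dotProduct]

theorem eq_of_forall_dotProduct_eq {w : ι → κ → R}
    (hrank : ∀ x : κ → R, (∀ v, w v ⬝ᵥ x = 0) → x = 0) {x y : κ → R}
    (h : ∀ v, w v ⬝ᵥ x = w v ⬝ᵥ y) : x = y :=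
  sub_eq_zero.mp <| hrank _ fun v => by rw [dotProduct_sub, h v, sub_self]

end DotProduct

open Real in
/-- Writing `log (p i j / μ j) = log (p i j) - log (μ j)`, the `μ j` terms cancel in the
row relation, symmetry of `p` turns it into a column relation, and `μ r μ s = μ t μ u`
supplies the matching `μ` terms. -/
theorem log_div_add_log_div_eq_transpose {ι : Type*} {p : ι → ι → ℝ}
    (hp : ∀ i j, 0 < p i j) (hsymm : ∀ i j, p i j = p j i) {μ : ι → ℝ} (hμ : ∀ j, 0 < μ j)
    {r s t u : ι} (hmarg : μ r * μ s = μ t * μ u)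
    (hrows : ∀ j, log (p r j / μ j) + log (p s j / μ j) = log (p t j / μ j) + log (p u j / μ j))
    (i : ι) :
    log (p i r / μ r) + log (p i s / μ s) = log (p i t / μ t) + log (p i u / μ u) := by
  have hlog_div : ∀ a b, log (p a b / μ b) = log (p a b) - log (μ b) := fun a b =>
    log_div (hp a b).ne' (hμ b).ne'
  have hμlog : log (μ r) + log (μ s) = log (μ t) + log (μ u) := by
    rw [← log_mul (hμ r).ne' (hμ s).ne', ← log_mul (hμ t).ne' (hμ u).ne', hmarg]
  have hrow := hrows i
  simp only [hlog_div] at hrow ⊢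
  simp only [hsymm _ i] at hrow
  linarith

theorem cbow_context_embedding_analogy_general
    (n p : ℕ)
    -- strictly positive symmetric joint matrix and strictly positive marginals
    (pj : Fin n → Fin n → ℝ) (hpj : ∀ i j, 0 < pj i j)
    (hsymm : ∀ i j, pj i j = pj j i)
    (μ : Fin n → ℝ) (hμ : ∀ j, 0 < μ j)
    -- center and context embeddings with exact CBOW factorization
    (w : Fin n → Fin p → ℝ) (c : Fin n → Fin p → ℝ)
    (hfact : ∀ i j : Fin n, w i ⬝ᵥ c j = Real.log (pj i j / μ j) + Real.log n)
    -- the four words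
    (r s t u : Fin n)
    -- (i) `p({r,s}) = p({t,u})` under exact marginal independence within each pair
    (hmarg : μ r * μ s = μ t * μ u)
    -- (ii) linear analogy among the center embeddings
    (hana : w r + w s = w t + w u)
    -- the center-embedding matrix `W` has rank `p`
    (hrank : ∀ x : Fin p → ℝ, (∀ v : Fin n, w v ⬝ᵥ x = 0) → x = 0) :
    c r + c s = c t + c u := by
  have hrows : ∀ j, Real.log (pj r j / μ j) + Real.log (pj s j / μ j) =
      Real.log (pj t j / μ j) + Real.log (pj u j / μ j) := fun j => by
    have h := dotProduct_add_eq_of_add_eq hana (c j)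
    simp only [hfact] at h
    linarith
  have hcols := log_div_add_log_div_eq_transpose hpj hsymm hμ hmarg hrows
  refine eq_of_forall_dotProduct_eq hrank fun v => ?_
  rw [dotProduct_add, dotProduct_add, hfact, hfact, hfact, hfact]
  linarith [hcols v]

/-- **Exact version of Proposition 5 (linear analogies transfer to CBOW context
embeddings).**  Under the exact CBOW factorization `wᵢᵀcⱼ = log(pᵢⱼ/μⱼ) + log n` with
symmetric strictly positive joint `p` and strictly positive marginals `μ`, if
`μᵣμₛ = μₜμᵤ` (encoding `p({r,s}) = p({t,u})` under exact marginal independence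
within each pair), `wᵣ + wₛ = wₜ + wᵤ`, and the matrix `W` of center embeddings has
rank `p` (only `x = 0` is orthogonal to all its rows), then `cᵣ + cₛ = cₜ + cᵤ`. -/
theorem cbow_context_embedding_analogy
    (n p : ℕ) (hn : 1 ≤ n)
    -- strictly positive symmetric joint matrix and strictly positive marginals
    (pj : Fin n → Fin n → ℝ) (hpj : ∀ i j, 0 < pj i j)
    (hsymm : ∀ i j, pj i j = pj j i)
    (μ : Fin n → ℝ) (hμ : ∀ j, 0 < μ j)
    -- center and context embeddings with exact CBOW factorization
    (w : Fin n → Fin p → ℝ) (c : Fin n → Fin p → ℝ)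
    (hfact : ∀ i j : Fin n, w i ⬝ᵥ c j = Real.log (pj i j / μ j) + Real.log n)
    -- the four words
    (r s t u : Fin n)
    -- (i) `p({r,s}) = p({t,u})` under exact marginal independence within each pair
    (hmarg : μ r * μ s = μ t * μ u)
    -- (ii) linear analogy among the center embeddings
    (hana : w r + w s = w t + w u)
    -- the center-embedding matrix `W` has rank `p`
    (hrank : ∀ x : Fin p → ℝ, (∀ v : Fin n, w v ⬝ᵥ x = 0) → x = 0) :
    c r + c s = c t + c u :=
  cbow_context_embedding_analogy_general n p pj hpj hsymm μ hμ w c hfact r s t u hmarg hana hrank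
end
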